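/- arXiv:2604.28019 — 5 statements merged into one kernel-verified Lean document; each statement's English description precedes it below -/
import Mathlib

section
/- For any square matrix A over an associative unital algebra, the symmetrized determinant commutes with transposition: sdet(Aᵀ) = (sdet A)ᵀ, where the transpose of an algebra element is interpreted via the algebra's anti-automorphism when A is a matrix algebra; more precisely, over Mat(F,m,m)-valued matrices, sdet(Aᵀ) where each entry is also transposed equals the transpose of sdet A. -/
open Equiv Matrix BigOperators

noncomputable def sdet (F : Type*) [Field F] {A : Type*} [Ring A] [Algebra F A] {n : ℕ}
    (M : Matrix (Fin n) (Fin n) A) : A :=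
  ((n.factorial : F)⁻¹) • ∑ σ : Equiv.Perm (Fin n), ∑ τ : Equiv.Perm (Fin n),
    ((Equiv.Perm.sign σ : ℤ) * (Equiv.Perm.sign τ : ℤ)) •
      (List.ofFn fun i => M (σ i) (τ i)).prod

/-!
Transposition is an algebra isomorphism `Mat(F,m,m) ≃ Mat(F,m,m)ᵐᵒᵖ` and `sdet` commutes with
algebra homomorphisms, so it suffices to compare `sdet` of `Mᵀ` over the opposite algebra with
`sdet M`. In the opposite algebra each product `a_{σ(1)τ(1)} ⋯ a_{σ(n)τ(n)}` is read backwards,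
which amounts to precomposing `σ` and `τ` with the reversal `i ↦ n - 1 - i`; this multiplies both
signs by the same factor, and the transposition of `M` only swaps the roles of `σ` and `τ`.
-/

theorem List.reverse_ofFn {α : Type*} {n : ℕ} (f : Fin n → α) :
    (List.ofFn f).reverse = List.ofFn (f ∘ Fin.rev) := by
  induction n with
  | zero => rfl
  | succ n ih =>
    rw [List.ofFn_succ, List.reverse_cons, ih, List.ofFn_succ']
    simp [Function.comp_def, Fin.rev_castSucc]

theorem Equiv.Perm.sign_mul_right_mul_sign_mul_right {α : Type*} [DecidableEq α] [Fintype α]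
    (σ τ π : Perm α) :
    (sign (σ * π) : ℤ) * sign (τ * π) = sign τ * sign σ := by
  rw [← Units.val_mul, ← Units.val_mul, sign_mul, sign_mul, mul_mul_mul_comm,
    Int.units_mul_self, mul_one, mul_comm]

section

variable {F A B : Type*} [Field F] [Ring A] [Algebra F A] [Ring B] [Algebra F B] {n : ℕ}

theorem sdet_map {G : Type*} [FunLike G A B] [AlgHomClass G F A B] (f : G)
    (M : Matrix (Fin n) (Fin n) A) :
    sdet F (M.map f) = f (sdet F M) := by
  simp only [sdet, map_smul, map_sum, map_zsmul, map_list_prod, List.map_ofFn]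
  rfl

theorem sdet_transpose_op (M : Matrix (Fin n) (Fin n) A) :
    sdet F (Mᵀ.map MulOpposite.op) = MulOpposite.op (sdet F M) := by
  rw [sdet, sdet, MulOpposite.op_smul, ← MulOpposite.opAddEquiv_apply]
  simp only [map_sum, map_zsmul, MulOpposite.opAddEquiv_apply, MulOpposite.op_list_prod,
    List.map_ofFn, List.reverse_ofFn]
  congr 1
  rw [Finset.sum_comm]
  refine Fintype.sum_equiv (Equiv.mulRight Fin.revPerm) _ _ fun τ => ?_
  refine Fintype.sum_equiv (Equiv.mulRight Fin.revPerm) _ _ fun σ => ?_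
  rw [coe_mulRight, Perm.sign_mul_right_mul_sign_mul_right]
  congr 3 with i
  simp [Perm.mul_apply]

end

theorem sdet_transpose_general {F : Type*} [Field F] {m n : ℕ}
    (A : Matrix (Fin n) (Fin n) (Matrix (Fin m) (Fin m) F)) :
    sdet F (Matrix.of fun i j : Fin n => (A j i)ᵀ) = (sdet F A)ᵀ := by
  calc sdet F (Matrix.of fun i j : Fin n => (A j i)ᵀ)
      = sdet F ((Aᵀ.map MulOpposite.op).map (transposeAlgEquiv (Fin m) F F).symm) :=
        congrArg (sdet F) (ext fun _ _ => rfl)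
    _ = (transposeAlgEquiv (Fin m) F F).symm (sdet F (Aᵀ.map MulOpposite.op)) := sdet_map _ _
    _ = (sdet F A)ᵀ := by rw [sdet_transpose_op, transposeAlgEquiv_symm_apply, MulOpposite.unop_op]

/-- The symmetrized determinant commutes with transposition: over
Mat(F,m,m)-valued matrices, sdet of the transposed matrix (with each entry
also transposed) equals the transpose of sdet A. -/
theorem sdet_transpose {F : Type*} [Field F] [CharZero F] {m n : ℕ}
    (A : Matrix (Fin n) (Fin n) (Matrix (Fin m) (Fin m) F)) :
    sdet F (Matrix.of fun i j : Fin n => (A j i)ᵀ) = (sdet F A)ᵀ :=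
  sdet_transpose_general A
end

section
/- Let M ∈ Mat(𝒜,p+q,p+q) be block lower triangular with blocks M = [[A, 0],[B, D]] where A is p×p, D is q×q and the top-right block is zero. Then sdet M = sdet M′ where M′ = [[A,0],[0,D]] is the corresponding block diagonal matrix; i.e., the symmetrized determinant does not depend on the block B. -/
open Equiv Matrix BigOperators

/-! Each term of `sdet` is a product of entries `M (σ i) (τ i)`. If some row in the upper block is
matched with a column in the right block, the term contains a zero from the upper-right block.
Otherwise the `p` rows of the upper block are matched with columns of the left block, and since
there are only `p` of those, every left column is matched with an upper row: the term never
meets the block `B`. -/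

section

variable {ι α β : Type*}

theorem ncard_setOf_isLeft (e : ι ≃ α ⊕ β) : {i | (e i).isLeft}.ncard = Nat.card α := by
  have : {i | (e i).isLeft} = e ⁻¹' Set.range Sum.inl := by rw [Set.range_inl]; rfl
  rw [this, Set.ncard_preimage_of_injective_subset_range e.injective (by simp),
    Set.ncard_range_of_injective Sum.inl_injective]

theorem setOf_isLeft_eq_of_subset [Finite ι] (e₁ e₂ : ι ≃ α ⊕ β)
    (h : {i | (e₁ i).isLeft} ⊆ {i | (e₂ i).isLeft}) :
    {i | (e₁ i).isLeft} = {i | (e₂ i).isLeft} :=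
  Set.eq_of_subset_of_ncard_le h (by rw [ncard_setOf_isLeft, ncard_setOf_isLeft])

end

theorem prod_ofFn_fromBlocks_eq {m n R : Type*} [MonoidWithZero R] {k : ℕ}
    (A : Matrix m m R) (B : Matrix n m R) (D : Matrix n n R) (σ τ : Fin k ≃ m ⊕ n) :
    (List.ofFn fun i => fromBlocks A 0 B D (σ i) (τ i)).prod =
      (List.ofFn fun i => fromBlocks A 0 0 D (σ i) (τ i)).prod := by
  by_cases hzero : ∃ i, (σ i).isLeft ∧ (τ i).isRight
  · obtain ⟨i, hσ, hτ⟩ := hzero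
    obtain ⟨a, ha⟩ := Sum.isLeft_iff.1 hσ
    obtain ⟨b, hb⟩ := Sum.isRight_iff.1 hτ
    rw [List.prod_eq_zero, List.prod_eq_zero] <;>
      exact List.mem_ofFn.2 ⟨i, by simp [ha, hb]⟩
  · have hsub : {i | (σ i).isLeft} ⊆ {i | (τ i).isLeft} := fun i hi => by
      simp only [not_exists, not_and, Sum.not_isRight] at hzero
      exact hzero i hi
    congr 2
    funext i
    have hi := Set.ext_iff.1 (setOf_isLeft_eq_of_subset σ τ hsub) i
    rcases hσ : σ i with a | a <;> rcases hτ : τ i with b | b <;> simp [hσ, hτ] at hi ⊢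

theorem sdet_blockTriangular_general {F : Type*} [Field F]
    {𝒜 : Type*} [Ring 𝒜] [Algebra F 𝒜] {p q : ℕ}
    (A : Matrix (Fin p) (Fin p) 𝒜) (B : Matrix (Fin q) (Fin p) 𝒜)
    (D : Matrix (Fin q) (Fin q) 𝒜) :
    sdet F ((Matrix.fromBlocks A 0 B D).submatrix finSumFinEquiv.symm finSumFinEquiv.symm) =
      sdet F ((Matrix.fromBlocks A 0 0 D).submatrix finSumFinEquiv.symm finSumFinEquiv.symm) := by
  unfold sdet
  congr 1
  refine Finset.sum_congr rfl fun σ _ => Finset.sum_congr rfl fun τ _ => ?_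
  congr 1
  exact prod_ofFn_fromBlocks_eq A B D (σ.trans finSumFinEquiv.symm) (τ.trans finSumFinEquiv.symm)

/-- The symmetrized determinant of a block lower triangular matrix does not
depend on the lower-left block B. -/
theorem sdet_blockTriangular {F : Type*} [Field F] [CharZero F]
    {𝒜 : Type*} [Ring 𝒜] [Algebra F 𝒜] {p q : ℕ}
    (A : Matrix (Fin p) (Fin p) 𝒜) (B : Matrix (Fin q) (Fin p) 𝒜)
    (D : Matrix (Fin q) (Fin q) 𝒜) :
    sdet F ((Matrix.fromBlocks A 0 B D).submatrix finSumFinEquiv.symm finSumFinEquiv.symm) =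
      sdet F ((Matrix.fromBlocks A 0 0 D).submatrix finSumFinEquiv.symm finSumFinEquiv.symm) :=
  sdet_blockTriangular_general A B D
end

section
/- Let σ, τ ∈ Sym_n and S ⊆ [n] with complement C = [n]∖S, and suppose σ(i) = τ(i) for all i ∈ C. For a permutation π, let d_π denote the number of 'mixed inversions' of π, i.e. pairs (i,j) with i ∈ S, j ∈ C such that either (i < j and π(i) > π(j)) or (i > j and π(i) < π(j)). Then d_σ ≡ d_τ (mod 2). -/
open Equiv Matrix BigOperators

/-- If σ and τ agree on the complement of S, then their numbers of 'mixed
inversions' (one position in S, one in the complement) have the same parity. -/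
theorem mixed_inversions_parity {n : ℕ} (σ τ : Equiv.Perm (Fin n))
    (S : Finset (Fin n)) (h : ∀ i : Fin n, i ∉ S → σ i = τ i) :
    (Finset.univ.filter fun p : Fin n × Fin n =>
        p.1 ∈ S ∧ p.2 ∉ S ∧
          ((p.1 < p.2 ∧ σ p.2 < σ p.1) ∨ (p.2 < p.1 ∧ σ p.1 < σ p.2))).card % 2 =
    (Finset.univ.filter fun p : Fin n × Fin n =>
        p.1 ∈ S ∧ p.2 ∉ S ∧
          ((p.1 < p.2 ∧ τ p.2 < τ p.1) ∨ (p.2 < p.1 ∧ τ p.1 < τ p.2))).card % 2 := by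
  classical
  -- σ and τ have the same image on S
  have himg : S.image σ = S.image τ := by
    ext x
    simp only [Finset.mem_image]
    constructor
    · rintro ⟨i, hi, rfl⟩
      by_cases hx : τ.symm (σ i) ∈ S
      · exact ⟨_, hx, Equiv.apply_symm_apply _ _⟩
      · exfalso
        have h1 : σ (τ.symm (σ i)) = σ i := by
          rw [h _ hx, Equiv.apply_symm_apply]
        have := σ.injective h1
        rw [this] at hx; exact hx hi
    · rintro ⟨i, hi, rfl⟩
      by_cases hx : σ.symm (τ i) ∈ S
      · exact ⟨_, hx, Equiv.apply_symm_apply _ _⟩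
      · exfalso
        have h1 : τ (σ.symm (τ i)) = τ i := by
          rw [← h _ hx, Equiv.apply_symm_apply]
        have := τ.injective h1
        rw [this] at hx; exact hx hi
  -- per-pair identity mod 2
  have pair : ∀ (π : Equiv.Perm (Fin n)) (i j : Fin n), i ∈ S → j ∈ Sᶜ →
      (if ((i < j ∧ π j < π i) ∨ (j < i ∧ π i < π j)) then (1:ZMod 2) else 0)
        = 1 + (if i < j then 1 else 0) + (if π j < π i then 1 else 0) := by
    intro π i j hi hj
    have hj' : j ∉ S := Finset.mem_compl.mp hj
    have hij : i ≠ j := fun e => hj' (e ▸ hi)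
    have hab : π i ≠ π j := fun e => hij (π.injective e)
    rcases lt_or_gt_of_ne hij with h1|h1 <;> rcases lt_or_gt_of_ne hab with h2|h2 <;>
      simp [h1, h2, lt_asymm h1, lt_asymm h2] <;> decide
  -- the count, as an element of ZMod 2
  have cnt : ∀ π : Equiv.Perm (Fin n),
      (((Finset.univ.filter fun p : Fin n × Fin n =>
        p.1 ∈ S ∧ p.2 ∉ S ∧
          ((p.1 < p.2 ∧ π p.2 < π p.1) ∨ (p.2 < p.1 ∧ π p.1 < π p.2))).card : ℕ) : ZMod 2)
      = ∑ i ∈ S, ∑ j ∈ Sᶜ,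
          (1 + (if i < j then 1 else 0) + (if π j < π i then (1:ZMod 2) else 0)) := by
    intro π
    have hset : (Finset.univ.filter fun p : Fin n × Fin n =>
        p.1 ∈ S ∧ p.2 ∉ S ∧
          ((p.1 < p.2 ∧ π p.2 < π p.1) ∨ (p.2 < p.1 ∧ π p.1 < π p.2)))
        = (S ×ˢ Sᶜ).filter fun p =>
            ((p.1 < p.2 ∧ π p.2 < π p.1) ∨ (p.2 < p.1 ∧ π p.1 < π p.2)) := by
      ext p
      simp [Finset.mem_product, and_assoc]
    rw [hset, Finset.card_filter]
    push_cast
    rw [Finset.sum_product]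
    exact Finset.sum_congr rfl fun i hi => Finset.sum_congr rfl fun j hj => pair π i j hi hj
  -- the π-dependent part agrees for σ and τ
  have key : (∑ i ∈ S, ∑ j ∈ Sᶜ, (if σ j < σ i then (1:ZMod 2) else 0))
      = ∑ i ∈ S, ∑ j ∈ Sᶜ, (if τ j < τ i then (1:ZMod 2) else 0) := by
    rw [Finset.sum_comm]
    conv_rhs => rw [Finset.sum_comm]
    refine Finset.sum_congr rfl fun j hj => ?_
    have hc : σ j = τ j := h j (Finset.mem_compl.mp hj)
    have inj1 : ∀ x ∈ S, ∀ y ∈ S, σ x = σ y → x = y := fun x _ y _ e => σ.injective e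
    have inj2 : ∀ x ∈ S, ∀ y ∈ S, τ x = τ y → x = y := fun x _ y _ e => τ.injective e
    calc ∑ i ∈ S, (if σ j < σ i then (1:ZMod 2) else 0)
        = ∑ t ∈ S.image σ, (if σ j < t then (1:ZMod 2) else 0) :=
          (Finset.sum_image (f := fun t => if σ j < t then (1:ZMod 2) else 0) inj1).symm
      _ = ∑ t ∈ S.image τ, (if τ j < t then (1:ZMod 2) else 0) := by rw [himg, hc]
      _ = ∑ i ∈ S, (if τ j < τ i then (1:ZMod 2) else 0) := Finset.sum_image (f := fun t => if τ j < t then (1:ZMod 2) else 0) inj2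
  suffices hz : (((Finset.univ.filter fun p : Fin n × Fin n =>
        p.1 ∈ S ∧ p.2 ∉ S ∧
          ((p.1 < p.2 ∧ σ p.2 < σ p.1) ∨ (p.2 < p.1 ∧ σ p.1 < σ p.2))).card : ℕ) : ZMod 2)
      = (((Finset.univ.filter fun p : Fin n × Fin n =>
        p.1 ∈ S ∧ p.2 ∉ S ∧
          ((p.1 < p.2 ∧ τ p.2 < τ p.1) ∨ (p.2 < p.1 ∧ τ p.1 < τ p.2))).card : ℕ) : ZMod 2) by
    exact (ZMod.natCast_eq_natCast_iff _ _ _).mp hz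
  rw [cnt σ, cnt τ]
  simp only [Finset.sum_add_distrib]
  rw [key]
end

section
/- Let σ, τ ∈ Sym_n and S ⊆ [n] with complement C, and suppose σ(i)=τ(i) for all i ∈ C. Fix c ∈ C with common value v = σ(c) = τ(c), let G = σ(S) = τ(S), L_c = |{s ∈ S : s < c}|, and L′_c = |{g ∈ G : g < v}|. Define B_σ(c) = |{s∈S : s<c, σ(s)>v}| + |{s∈S : s>c, σ(s)<v}|. Then B_σ(c) ≡ L_c + L′_c (mod 2), and in particular B_σ(c) ≡ B_τ(c) (mod 2). -/
open Equiv Matrix BigOperators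

private lemma key_count {n : ℕ} (σ : Equiv.Perm (Fin n)) (S : Finset (Fin n))
    (c : Fin n) (hc : c ∉ S) :
    ((S.filter fun s => s < c ∧ σ c < σ s).card +
        (S.filter fun s => c < s ∧ σ s < σ c).card) % 2 =
      ((S.filter fun s => s < c).card +
        (S.filter fun s => σ s < σ c).card) % 2 := by
  classical
  have hne : ∀ s ∈ S, σ s ≠ σ c := fun s hs e => hc (σ.injective e ▸ hs)
  have hne' : ∀ s ∈ S, s ≠ c := fun s hs e => hc (e ▸ hs)
  have h1 : ((S.filter fun s => s < c).filter fun s => σ c < σ s)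
      = S.filter fun s => s < c ∧ σ c < σ s := by
    simp [Finset.filter_filter]
  have h2 : ((S.filter fun s => s < c).filter fun s => ¬ σ c < σ s)
      = S.filter fun s => s < c ∧ σ s < σ c := by
    ext s
    simp only [Finset.mem_filter]
    constructor
    · rintro ⟨⟨hs, hlt⟩, hn⟩
      exact ⟨hs, hlt, lt_of_le_of_ne (not_lt.mp hn) (hne s hs)⟩
    · rintro ⟨hs, hlt, h'⟩
      exact ⟨⟨hs, hlt⟩, not_lt.mpr h'.le⟩
  have h3 : ((S.filter fun s => σ s < σ c).filter fun s => ¬ s < c)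
      = S.filter fun s => c < s ∧ σ s < σ c := by
    ext s
    simp only [Finset.mem_filter]
    constructor
    · rintro ⟨⟨hs, hlt⟩, hn⟩
      exact ⟨hs, lt_of_le_of_ne (not_lt.mp hn) (Ne.symm (hne' s hs)), hlt⟩
    · rintro ⟨hs, hlt, h'⟩
      exact ⟨⟨hs, h'⟩, not_lt.mpr hlt.le⟩
  have h4 : ((S.filter fun s => σ s < σ c).filter fun s => s < c)
      = S.filter fun s => s < c ∧ σ s < σ c := by
    ext s
    simp only [Finset.mem_filter]
    tauto
  have e1 := Finset.card_filter_add_card_filter_not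
    (s := S.filter fun s => s < c) (p := fun s => σ c < σ s)
  have e2 := Finset.card_filter_add_card_filter_not
    (s := S.filter fun s => σ s < σ c) (p := fun s => s < c)
  rw [h1, h2] at e1
  rw [h3, h4] at e2
  omega

/-- Let σ, τ agree on the complement of S, fix c ∉ S with v = σ c, G = σ(S),
L_c = #{s ∈ S : s < c}, L'_c = #{g ∈ G : g < v}, and
B_σ(c) = #{s ∈ S : s < c, σ s > v} + #{s ∈ S : s > c, σ s < v}.
Then B_σ(c) ≡ L_c + L'_c (mod 2), and in particular B_σ(c) ≡ B_τ(c) (mod 2). -/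
theorem mixed_inversions_at_point {n : ℕ} (σ τ : Equiv.Perm (Fin n))
    (S : Finset (Fin n)) (h : ∀ i : Fin n, i ∉ S → σ i = τ i)
    (c : Fin n) (hc : c ∉ S) :
    ((S.filter fun s => s < c ∧ σ c < σ s).card +
        (S.filter fun s => c < s ∧ σ s < σ c).card) % 2 =
      ((S.filter fun s => s < c).card +
        ((S.image fun s => σ s).filter fun g => g < σ c).card) % 2 ∧
    ((S.filter fun s => s < c ∧ σ c < σ s).card +
        (S.filter fun s => c < s ∧ σ s < σ c).card) % 2 =
      ((S.filter fun s => s < c ∧ τ c < τ s).card +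
        (S.filter fun s => c < s ∧ τ s < τ c).card) % 2 := by
  classical
  have himg : ((S.image fun s => σ s).filter fun g => g < σ c)
      = (S.filter fun s => σ s < σ c).image fun s => σ s := by
    rw [Finset.filter_image]
  have hcard : ((S.image fun s => σ s).filter fun g => g < σ c).card
      = (S.filter fun s => σ s < σ c).card := by
    rw [himg, Finset.card_image_of_injective _ σ.injective]
  have hστc : σ c = τ c := h c hc
  have himg2 : S.image (fun s => σ s) = S.image fun s => τ s := by
    ext g
    simp only [Finset.mem_image]
    constructor
    · rintro ⟨s, hs, rfl⟩
      by_cases hgs : τ.symm (σ s) ∈ S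
      · exact ⟨_, hgs, Equiv.apply_symm_apply _ _⟩
      · exfalso
        have : σ (τ.symm (σ s)) = σ s := by
          rw [h _ hgs]; exact Equiv.apply_symm_apply _ _
        exact hgs (by rwa [σ.injective this])
    · rintro ⟨s, hs, rfl⟩
      by_cases hgs : σ.symm (τ s) ∈ S
      · exact ⟨_, hgs, Equiv.apply_symm_apply _ _⟩
      · exfalso
        have : τ (σ.symm (τ s)) = τ s := by
          rw [← h _ hgs]; exact Equiv.apply_symm_apply _ _
        exact hgs (by rwa [τ.injective this])
  have hcardτ : ((S.image fun s => σ s).filter fun g => g < σ c).card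
      = (S.filter fun s => τ s < τ c).card := by
    rw [himg2, hστc, Finset.filter_image, Finset.card_image_of_injective _ τ.injective]
  constructor
  · rw [hcard]; exact key_count σ S c hc
  · rw [key_count σ S c hc, key_count τ S c hc, ← hcard, hcardτ]
end

section
/- Let σ, τ ∈ Sym_n agree on the complement of S ⊆ [n]. Decompose the inversion count of σ as I¹_σ + I²_σ + I³_σ, counting inversions with both positions in S, both in C = [n]∖S, and mixed, respectively (and similarly for τ). Then I²_σ = I²_τ, I³_σ ≡ I³_τ (mod 2), and hence sgn(σ)·sgn(τ) = (−1)^{I¹_σ + I¹_τ}; i.e., the product of signs depends only on the restrictions of σ and τ to S. -/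
open Equiv Matrix BigOperators

section AuxSign
open Equiv Equiv.Perm Finset
variable {n : ℕ}

lemma signAux_eq_sign (f : Perm (Fin n)) : Equiv.Perm.signAux f = Equiv.Perm.sign f := by
  refine Equiv.Perm.swap_induction_on f ?_ ?_
  · simp [Equiv.Perm.signAux_one]
  · intro f x y hxy ih
    rw [Equiv.Perm.signAux_mul, Equiv.Perm.signAux_swap hxy, Equiv.Perm.sign_mul,
      Equiv.Perm.sign_swap hxy, ih]

lemma sign_eq_pow_inv (f : Perm (Fin n)) :
    (Equiv.Perm.sign f : ℤˣ) = (-1) ^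
      (Finset.univ.filter fun p : Fin n × Fin n => p.1 < p.2 ∧ f p.2 < f p.1).card := by
  rw [← signAux_eq_sign]
  unfold Equiv.Perm.signAux
  rw [← Finset.prod_filter, Finset.prod_const]
  congr 1
  refine Finset.card_bij (fun x _ => (x.2, x.1)) ?_ ?_ ?_
  · rintro x hx
    simp only [Finset.mem_filter, Equiv.Perm.mem_finPairsLT] at hx ⊢
    refine ⟨Finset.mem_univ _, hx.1, lt_of_le_of_ne hx.2 (fun he => ?_)⟩
    exact absurd (f.injective he) (ne_of_gt hx.1)
  · rintro x hx y hy hxy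
    simp only [Prod.mk.injEq] at hxy
    exact Sigma.ext hxy.2 (heq_of_eq hxy.1)
  · rintro p hp
    simp only [Finset.mem_filter, Finset.mem_univ, true_and] at hp
    exact ⟨⟨p.2, p.1⟩, by simp [Equiv.Perm.mem_finPairsLT, hp.1, le_of_lt hp.2], rfl⟩

section
variable (S : Finset (Fin n)) (σ : Perm (Fin n))

-- mixed inversions (unordered, anchored at S in first slot)
private def Mx : ℕ := (Finset.univ.filter fun p : Fin n × Fin n =>
    p.1 ∈ S ∧ p.2 ∉ S ∧ ((p.1 < p.2 ∧ σ p.2 < σ p.1) ∨ (p.2 < p.1 ∧ σ p.1 < σ p.2))).card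
private def E1 : ℕ := (Finset.univ.filter fun p : Fin n × Fin n =>
    p.1 ∈ S ∧ p.2 ∉ S ∧ p.1 < p.2 ∧ σ p.2 < σ p.1).card
private def E2 : ℕ := (Finset.univ.filter fun p : Fin n × Fin n =>
    p.1 ∈ S ∧ p.2 ∉ S ∧ p.2 < p.1 ∧ σ p.1 < σ p.2).card
private def E3 : ℕ := (Finset.univ.filter fun p : Fin n × Fin n =>
    p.1 ∈ S ∧ p.2 ∉ S ∧ p.2 < p.1 ∧ σ p.2 < σ p.1).card
private def Aset : ℕ := (Finset.univ.filter fun p : Fin n × Fin n =>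
    p.1 ∈ S ∧ p.2 ∉ S ∧ p.2 < p.1).card
private def Bset : ℕ := (Finset.univ.filter fun p : Fin n × Fin n =>
    p.1 ∈ S ∧ p.2 ∉ S ∧ σ p.2 < σ p.1).card
private def J4 : ℕ := (Finset.univ.filter fun p : Fin n × Fin n =>
    p.1 ∉ S ∧ p.2 ∈ S ∧ p.1 < p.2 ∧ σ p.2 < σ p.1).card
private def I1 : ℕ := (Finset.univ.filter fun p : Fin n × Fin n =>
    p.1 ∈ S ∧ p.2 ∈ S ∧ p.1 < p.2 ∧ σ p.2 < σ p.1).card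
private def I2 : ℕ := (Finset.univ.filter fun p : Fin n × Fin n =>
    p.1 ∉ S ∧ p.2 ∉ S ∧ p.1 < p.2 ∧ σ p.2 < σ p.1).card

private lemma Mx_eq : Mx S σ = E1 S σ + E2 S σ := by
  unfold Mx E1 E2
  rw [Finset.card_filter, Finset.card_filter, Finset.card_filter, ← Finset.sum_add_distrib]
  refine Finset.sum_congr rfl fun p _ => ?_
  rcases Decidable.em (p.1 < p.2 ∧ σ p.2 < σ p.1) with h3 | h3
  · have h4 : ¬(p.2 < p.1 ∧ σ p.1 < σ p.2) := fun h4 => absurd h4.1 (lt_asymm h3.1)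
    simp [h3, h4]
  · by_cases h4 : p.2 < p.1 ∧ σ p.1 < σ p.2 <;> by_cases h1 : p.1 ∈ S <;>
      by_cases h2 : p.2 ∉ S <;> simp [*]

private lemma ne_of_mem_not_mem {p : Fin n × Fin n} (h1 : p.1 ∈ S) (h2 : p.2 ∉ S) :
    p.1 ≠ p.2 := fun he => h2 (he ▸ h1)

private lemma A_eq : Aset S = E2 S σ + E3 S σ := by
  unfold Aset E2 E3
  rw [Finset.card_filter, Finset.card_filter, Finset.card_filter, ← Finset.sum_add_distrib]
  refine Finset.sum_congr rfl fun p _ => ?_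
  by_cases h1 : p.1 ∈ S
  · by_cases h2 : p.2 ∉ S
    · by_cases h3 : p.2 < p.1
      · have hne : σ p.1 ≠ σ p.2 := fun he => ne_of_mem_not_mem S h1 h2 (σ.injective he)
        rcases lt_or_gt_of_ne hne with hl | hl
        · simp [h1, h2, h3, hl, lt_asymm hl]
        · simp [h1, h2, h3, hl, lt_asymm hl]
      · simp [h1, h2, h3]
    · simp [h2]
  · simp [h1]

private lemma B_eq : Bset S σ = E1 S σ + E3 S σ := by
  unfold Bset E1 E3
  rw [Finset.card_filter, Finset.card_filter, Finset.card_filter, ← Finset.sum_add_distrib]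
  refine Finset.sum_congr rfl fun p _ => ?_
  by_cases h1 : p.1 ∈ S
  · by_cases h2 : p.2 ∉ S
    · by_cases h3 : σ p.2 < σ p.1
      · have hne : p.1 ≠ p.2 := ne_of_mem_not_mem S h1 h2
        rcases lt_or_gt_of_ne hne with hl | hl
        · simp [h1, h2, h3, hl, lt_asymm hl]
        · simp [h1, h2, h3, hl, lt_asymm hl]
      · simp [h1, h2, h3]
    · simp [h2]
  · simp [h1]

private lemma J4_eq : J4 S σ = E2 S σ := by
  unfold J4 E2
  refine Finset.card_bij (fun p _ => (p.2, p.1)) ?_ ?_ ?_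
  · rintro p hp
    simp only [Finset.mem_filter, Finset.mem_univ, true_and] at hp ⊢
    exact ⟨hp.2.1, hp.1, hp.2.2.1, hp.2.2.2⟩
  · rintro p _ q _ hpq
    simp only [Prod.mk.injEq] at hpq
    exact Prod.ext hpq.2 hpq.1
  · rintro p hp
    simp only [Finset.mem_filter, Finset.mem_univ, true_and] at hp
    exact ⟨(p.2, p.1), by simp [hp.1, hp.2.1, hp.2.2.1, hp.2.2.2], rfl⟩

private lemma inv_decomp :
    (Finset.univ.filter fun p : Fin n × Fin n => p.1 < p.2 ∧ σ p.2 < σ p.1).card =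
      I1 S σ + I2 S σ + E1 S σ + J4 S σ := by
  unfold I1 I2 E1 J4
  rw [Finset.card_filter, Finset.card_filter, Finset.card_filter, Finset.card_filter,
    Finset.card_filter, ← Finset.sum_add_distrib, ← Finset.sum_add_distrib,
    ← Finset.sum_add_distrib]
  refine Finset.sum_congr rfl fun p _ => ?_
  by_cases h1 : p.1 ∈ S <;> by_cases h2 : p.2 ∈ S <;>
    by_cases h3 : p.1 < p.2 ∧ σ p.2 < σ p.1 <;> simp_all

end

private lemma B_congr (S : Finset (Fin n)) (σ τ : Perm (Fin n))
    (h : ∀ i : Fin n, i ∉ S → σ i = τ i) : Bset S σ = Bset S τ := by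
  unfold Bset
  have hmem : ∀ (σ τ : Perm (Fin n)), (∀ i : Fin n, i ∉ S → σ i = τ i) →
      ∀ x : Fin n, x ∈ S → τ.symm (σ x) ∈ S := by
    intro σ τ h x hx
    by_contra hc
    have : σ (τ.symm (σ x)) = σ x := by
      rw [h _ hc]; exact τ.apply_symm_apply _
    exact hc (by rw [σ.injective this]; exact hx)
  refine Finset.card_bij (fun p _ => (τ.symm (σ p.1), p.2)) ?_ ?_ ?_
  · rintro p hp
    simp only [Finset.mem_filter, Finset.mem_univ, true_and] at hp ⊢
    refine ⟨hmem σ τ h p.1 hp.1, hp.2.1, ?_⟩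
    rw [τ.apply_symm_apply, ← h _ hp.2.1]
    exact hp.2.2
  · rintro p _ q _ hpq
    simp only [Prod.mk.injEq] at hpq
    exact Prod.ext (σ.injective (τ.symm.injective hpq.1)) hpq.2
  · rintro q hq
    simp only [Finset.mem_filter, Finset.mem_univ, true_and] at hq
    have h' : ∀ i : Fin n, i ∉ S → τ i = σ i := fun i hi => (h i hi).symm
    refine ⟨(σ.symm (τ q.1), q.2), ?_, by simp⟩
    simp only [Finset.mem_filter, Finset.mem_univ, true_and]
    refine ⟨hmem τ σ h' q.1 hq.1, hq.2.1, ?_⟩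
    rw [σ.apply_symm_apply, h _ hq.2.1]
    exact hq.2.2

private lemma I2_congr (S : Finset (Fin n)) (σ τ : Perm (Fin n))
    (h : ∀ i : Fin n, i ∉ S → σ i = τ i) : I2 S σ = I2 S τ := by
  unfold I2
  congr 1
  refine Finset.filter_congr fun p _ => ?_
  constructor
  · rintro ⟨h1, h2, h3, h4⟩
    exact ⟨h1, h2, h3, by rwa [← h _ h1, ← h _ h2]⟩
  · rintro ⟨h1, h2, h3, h4⟩
    exact ⟨h1, h2, h3, by rwa [h _ h1, h _ h2]⟩

end AuxSign

/-- Decompose the inversions of a permutation into those with both positions in S,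
both in the complement C, and mixed.  If σ and τ agree on C, then the C-inversion
counts are equal, the mixed inversion counts agree mod 2, and hence
sgn(σ)·sgn(τ) = (−1)^{I¹_σ + I¹_τ} depends only on the restrictions to S. -/
theorem sign_product_eq_S_inversions {n : ℕ} (σ τ : Equiv.Perm (Fin n))
    (S : Finset (Fin n)) (h : ∀ i : Fin n, i ∉ S → σ i = τ i) :
    (Finset.univ.filter fun p : Fin n × Fin n =>
        p.1 ∉ S ∧ p.2 ∉ S ∧ p.1 < p.2 ∧ σ p.2 < σ p.1).card =
      (Finset.univ.filter fun p : Fin n × Fin n =>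
        p.1 ∉ S ∧ p.2 ∉ S ∧ p.1 < p.2 ∧ τ p.2 < τ p.1).card ∧
    (Finset.univ.filter fun p : Fin n × Fin n =>
        p.1 ∈ S ∧ p.2 ∉ S ∧
          ((p.1 < p.2 ∧ σ p.2 < σ p.1) ∨ (p.2 < p.1 ∧ σ p.1 < σ p.2))).card % 2 =
      (Finset.univ.filter fun p : Fin n × Fin n =>
        p.1 ∈ S ∧ p.2 ∉ S ∧
          ((p.1 < p.2 ∧ τ p.2 < τ p.1) ∨ (p.2 < p.1 ∧ τ p.1 < τ p.2))).card % 2 ∧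
    ((Equiv.Perm.sign σ : ℤ) * (Equiv.Perm.sign τ : ℤ)) =
      (-1) ^ ((Finset.univ.filter fun p : Fin n × Fin n =>
          p.1 ∈ S ∧ p.2 ∈ S ∧ p.1 < p.2 ∧ σ p.2 < σ p.1).card +
        (Finset.univ.filter fun p : Fin n × Fin n =>
          p.1 ∈ S ∧ p.2 ∈ S ∧ p.1 < p.2 ∧ τ p.2 < τ p.1).card) := by
  have hI2 : I2 S σ = I2 S τ := I2_congr S σ τ h
  have hB : Bset S σ = Bset S τ := B_congr S σ τ h
  have hMσ := Mx_eq S σ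
  have hMτ := Mx_eq S τ
  have hAσ := A_eq S σ
  have hAτ := A_eq S τ
  have hBσ := B_eq S σ
  have hBτ := B_eq S τ
  have hmod : Mx S σ % 2 = Mx S τ % 2 := by omega
  refine ⟨hI2, hmod, ?_⟩
  have hsσ : (Equiv.Perm.sign σ : ℤ) =
      (-1 : ℤ) ^ (Finset.univ.filter fun p : Fin n × Fin n =>
        p.1 < p.2 ∧ σ p.2 < σ p.1).card := by
    rw [sign_eq_pow_inv σ]; push_cast; ring
  have hsτ : (Equiv.Perm.sign τ : ℤ) =
      (-1 : ℤ) ^ (Finset.univ.filter fun p : Fin n × Fin n =>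
        p.1 < p.2 ∧ τ p.2 < τ p.1).card := by
    rw [sign_eq_pow_inv τ]; push_cast; ring
  have hdσ := inv_decomp S σ
  have hdτ := inv_decomp S τ
  have hJσ := J4_eq S σ
  have hJτ := J4_eq S τ
  have hexp : (Finset.univ.filter fun p : Fin n × Fin n =>
        p.1 < p.2 ∧ σ p.2 < σ p.1).card +
      (Finset.univ.filter fun p : Fin n × Fin n =>
        p.1 < p.2 ∧ τ p.2 < τ p.1).card =
      (I1 S σ + I1 S τ) + ((I2 S σ + I2 S τ) + (Mx S σ + Mx S τ)) := by omega
  have hev : Even ((I2 S σ + I2 S τ) + (Mx S σ + Mx S τ)) := by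
    refine Even.add ?_ ?_
    · exact (Nat.even_add.2 (by rw [hI2]))
    · exact (Nat.even_add.2 (by simp [Nat.even_iff, hmod]))
  rw [hsσ, hsτ, ← pow_add, hexp, pow_add, Even.neg_one_pow hev, mul_one]
  rfl
end
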